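/- In the ring of formal power series in the two variables x and y with coefficients in ℤ[q], the identity Σ_{m=0}^{∞} y^m (x;q)_m = Σ_{ℓ=0}^{∞} (−xy)^ℓ q^{ℓ(ℓ−1)/2} · (y;q)_{ℓ+1}^{−1} holds, where each factor (y;q)_{ℓ+1} = (1−y)(1−qy)⋯(1−q^ℓ y) is invertible as a formal power series (its constant term is 1). -/

import Mathlib

/-- The variable `x` of `ℤ[q][[x,y]]`. -/
noncomputable def Xv : MvPowerSeries (Fin 2) (Polynomial ℤ) := MvPowerSeries.X 0

/-- The variable `y` of `ℤ[q][[x,y]]`. -/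
noncomputable def Yv : MvPowerSeries (Fin 2) (Polynomial ℤ) := MvPowerSeries.X 1

/-- The parameter `q`, viewed as a constant of `ℤ[q][[x,y]]`. -/
noncomputable def qc : MvPowerSeries (Fin 2) (Polynomial ℤ) :=
  MvPowerSeries.C (σ := Fin 2) (R := Polynomial ℤ) Polynomial.X

/-- The sum `∑_{m=0}^∞ f m` of a family of two-variable power series whose `m`-th member
lies in the `m`-th power of the ideal `(x, y)`: its coefficient on the monomial `x^{d 0} y^{d 1}`
is the (finite) sum of the corresponding coefficients of `f 0, …, f (d 0 + d 1)`. -/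
noncomputable def seriesSum (f : ℕ → MvPowerSeries (Fin 2) (Polynomial ℤ)) :
    MvPowerSeries (Fin 2) (Polynomial ℤ) :=
  fun d => MvPowerSeries.coeff (R := Polynomial ℤ) d (∑ m ∈ Finset.range (d 0 + d 1 + 1), f m)

/-!
Comparing coefficients of `x^a y^b`, only the term `m = b` on the left and the term `ℓ = a` on
the right contribute, so the identity reduces to the one-variable statement
`[x^a] (x;q)_b = (-1)^a q^(a choose 2) [y^(b-a)] (y;q)_(a+1)⁻¹`
(both sides being `0` for `a > b`).
Writing `(x;q)_(b+1) = (1 - x) (qx;q)_b` gives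
`[x^(a+1)] (x;q)_(b+1) = q^(a+1) [x^(a+1)] (x;q)_b - q^a [x^a] (x;q)_b`,
and `(y;q)_(a+1)⁻¹ = (1 - q^(a+1) y) (y;q)_(a+2)⁻¹` gives the same recurrence for the
right-hand side, so a double induction on `a` and `b - a` proves it.
-/

open Finset PowerSeries

namespace PowerSeries

variable {R : Type*} [CommRing R] (q : R)

noncomputable def qPochhammer (n : ℕ) : R⟦X⟧ :=
  ∏ i ∈ range n, (1 - C (q ^ i) * X)

lemma constantCoeff_qPochhammer (n : ℕ) : constantCoeff (qPochhammer q n) = 1 := by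
  simp [qPochhammer, map_prod]

lemma isUnit_qPochhammer (n : ℕ) : IsUnit (qPochhammer q n) := by
  simp [isUnit_iff_constantCoeff, constantCoeff_qPochhammer]

lemma qPochhammer_succ (n : ℕ) :
    qPochhammer q (n + 1) = qPochhammer q n * (1 - C (q ^ n) * X) :=
  prod_range_succ _ n

lemma qPochhammer_succ_eq_one_sub_X_mul_rescale (n : ℕ) :
    qPochhammer q (n + 1) = (1 - X) * rescale q (qPochhammer q n) := by
  have rescale_C (r : R) : rescale q (C r) = C r := by ext (_ | _) <;> simp [coeff_C]
  rw [qPochhammer, qPochhammer, prod_range_succ', map_prod, mul_comm]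
  simp only [pow_zero, map_one, one_mul, pow_succ, map_mul, map_pow, mul_assoc, map_sub, rescale_C,
    rescale_X]

lemma coeff_succ_qPochhammer_succ (a n : ℕ) :
    coeff (a + 1) (qPochhammer q (n + 1)) =
      q ^ (a + 1) * coeff (a + 1) (qPochhammer q n) - q ^ a * coeff a (qPochhammer q n) := by
  rw [qPochhammer_succ_eq_one_sub_X_mul_rescale, sub_mul, one_mul, map_sub, coeff_succ_X_mul,
    coeff_rescale, coeff_rescale]

lemma coeff_qPochhammer_of_lt {a n : ℕ} (h : n < a) : coeff a (qPochhammer q n) = 0 := by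
  induction n generalizing a with
  | zero => simp [qPochhammer, coeff_one, h.ne']
  | succ n ih =>
    obtain ⟨a, rfl⟩ := Nat.exists_eq_add_one_of_ne_zero (by omega : a ≠ 0)
    rw [coeff_succ_qPochhammer_succ, ih (by omega), ih (by omega), mul_zero, mul_zero, sub_zero]

lemma coeff_zero_qPochhammer (n : ℕ) : coeff 0 (qPochhammer q n) = 1 := by
  rw [coeff_zero_eq_constantCoeff_apply, constantCoeff_qPochhammer]

lemma coeff_zero_ringInverse_qPochhammer (n : ℕ) :
    coeff 0 (Ring.inverse (qPochhammer q n)) = 1 := by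
  have h := congrArg constantCoeff (Ring.inverse_mul_cancel _ (isUnit_qPochhammer q n))
  rwa [map_mul, constantCoeff_qPochhammer, mul_one, map_one,
    ← coeff_zero_eq_constantCoeff_apply] at h

lemma coeff_ringInverse_qPochhammer_one (n : ℕ) :
    coeff n (Ring.inverse (qPochhammer q 1)) = 1 := by
  have h : qPochhammer q 1 = 1 - X := by simp [qPochhammer]
  have hu : IsUnit (1 - X : R⟦X⟧) := h ▸ isUnit_qPochhammer q 1
  have hinv := (Ring.eq_mul_inverse_iff_mul_eq _ 1 _ hu).mpr (mk_one_mul_one_sub_eq_one R)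
  rw [h, ← one_mul (Ring.inverse _), ← hinv, coeff_mk, Pi.one_apply]

lemma ringInverse_qPochhammer_eq_mul_ringInverse_succ (n : ℕ) :
    Ring.inverse (qPochhammer q n) =
      (1 - C (q ^ n) * X) * Ring.inverse (qPochhammer q (n + 1)) := by
  have hu : IsUnit (1 - C (q ^ n) * X) := by simp [isUnit_iff_constantCoeff]
  rw [qPochhammer_succ, Ring.inverse_mul (Or.inl (isUnit_qPochhammer q n)),
    Ring.mul_inverse_cancel_left _ _ hu]

lemma coeff_succ_ringInverse_qPochhammer_succ (a n : ℕ) :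
    coeff (n + 1) (Ring.inverse (qPochhammer q (a + 1))) =
      coeff (n + 1) (Ring.inverse (qPochhammer q a)) +
        q ^ a * coeff n (Ring.inverse (qPochhammer q (a + 1))) := by
  rw [ringInverse_qPochhammer_eq_mul_ringInverse_succ q a, sub_mul, one_mul, map_sub,
    mul_assoc, coeff_C_mul, coeff_succ_X_mul, sub_add_cancel]

theorem coeff_qPochhammer_add (a n : ℕ) :
    coeff a (qPochhammer q (a + n)) =
      (-1) ^ a * q ^ a.choose 2 * coeff n (Ring.inverse (qPochhammer q (a + 1))) := by
  induction a generalizing n with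
  | zero => simp [coeff_zero_qPochhammer, coeff_ringInverse_qPochhammer_one]
  | succ a iha =>
    induction n with
    | zero =>
      have hdiag : coeff a (qPochhammer q a) = (-1) ^ a * q ^ a.choose 2 := by
        simpa [coeff_zero_ringInverse_qPochhammer] using iha 0
      rw [add_zero, coeff_succ_qPochhammer_succ, coeff_qPochhammer_of_lt q (lt_add_one a), hdiag,
        coeff_zero_ringInverse_qPochhammer, Nat.choose_succ_succ', Nat.choose_one_right]
      ring
    | succ n ihn =>
      rw [← add_assoc, coeff_succ_qPochhammer_succ, ihn, show a + 1 + n = a + (n + 1) by omega,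
        iha, coeff_succ_ringInverse_qPochhammer_succ q (a + 1) n, Nat.choose_succ_succ',
        Nat.choose_one_right]
      ring

theorem coeff_qPochhammer (a b : ℕ) :
    coeff a (qPochhammer q b) =
      if a ≤ b then
        (-1) ^ a * q ^ a.choose 2 * coeff (b - a) (Ring.inverse (qPochhammer q (a + 1)))
      else 0 := by
  split_ifs with h
  · obtain ⟨n, rfl⟩ := Nat.exists_eq_add_of_le h
    rw [coeff_qPochhammer_add, Nat.add_sub_cancel_left]
  · exact coeff_qPochhammer_of_lt q (not_le.mp h)

end PowerSeries

lemma map_ringInverse {M N F : Type*} [MonoidWithZero M] [MonoidWithZero N] [FunLike F M N]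
    [MonoidHomClass F M N] (f : F) {a : M} (ha : IsUnit a) :
    f (Ring.inverse a) = Ring.inverse (f a) := by
  obtain ⟨u, rfl⟩ := ha
  have hu : f u = (Units.map (f : M →* N) u : N) := rfl
  rw [hu, Ring.inverse_unit, Ring.inverse_unit, ← map_inv (Units.map (f : M →* N)) u]
  rfl

lemma PowerSeries.coeff_toMvPowerSeries {R σ : Type*} [CommSemiring R] [DecidableEq σ]
    (f : R⟦X⟧) (i : σ) (d : σ →₀ ℕ) :
    MvPowerSeries.coeff d (f.toMvPowerSeries i) =
      if d = Finsupp.single i (d i) then coeff (d i) f else 0 := by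
  split_ifs with h
  · have hsingle := MvPowerSeries.coeff_embDomain_rename (Function.Embedding.punit i) f
      (Finsupp.single () (d i))
    rw [Finsupp.embDomain_single] at hsingle
    conv_lhs => rw [h]
    exact hsingle
  · refine MvPowerSeries.coeff_rename_eq_zero _ f ?_
    rintro ⟨x, rfl⟩
    obtain ⟨n, rfl⟩ : ∃ n, x = Finsupp.single () n := ⟨x (), Finsupp.unique_single x⟩
    simp [Finsupp.mapDomain_single] at h

namespace MvPowerSeries

lemma coeff_X_pow_mul_toMvPowerSeries {R : Type*} [CommSemiring R] (f : R⟦X⟧) (m : ℕ)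
    (d : Fin 2 →₀ ℕ) :
    coeff d (X 1 ^ m * f.toMvPowerSeries 0) = if d 1 = m then PowerSeries.coeff (d 0) f else 0 := by
  rw [X_pow_eq, coeff_monomial_mul, coeff_toMvPowerSeries]
  simp only [Finsupp.single_le_iff, Finsupp.coe_tsub, Pi.sub_apply, Finsupp.single_eq_of_ne,
    zero_ne_one, one_ne_zero, ne_eq, not_false_eq_true, Finsupp.single_eq_same, tsub_zero,
    Finsupp.ext_iff, Fin.forall_fin_two, true_and, one_mul]
  split_ifs <;> first | rfl | omega

variable {R : Type*} [CommRing R] (q : R)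

lemma prod_one_sub_C_pow_mul_X {σ : Type*} (i : σ) (n : ℕ) :
    ∏ k ∈ range n, (1 - C q ^ k * X i) = (qPochhammer q n).toMvPowerSeries i := by
  simp [qPochhammer, map_prod]

lemma ringInverse_toMvPowerSeries_qPochhammer {σ : Type*} (i : σ) (n : ℕ) :
    Ring.inverse ((qPochhammer q n).toMvPowerSeries i) =
      (Ring.inverse (qPochhammer q n)).toMvPowerSeries i :=
  (map_ringInverse _ (isUnit_qPochhammer q n)).symm

variable {q}

lemma coeff_neg_X_mul_X_pow_mul_C_pow_mul_toMvPowerSeries (f : R⟦X⟧) (ℓ k : ℕ)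
    (d : Fin 2 →₀ ℕ) :
    coeff d ((-(X 0 * X 1)) ^ ℓ * C q ^ k * f.toMvPowerSeries 1) =
      if d 0 = ℓ ∧ ℓ ≤ d 1 then (-1) ^ ℓ * q ^ k * PowerSeries.coeff (d 1 - ℓ) f
      else 0 := by
  have hfactor : (-(X 0 * X 1) : MvPowerSeries (Fin 2) R) ^ ℓ * C q ^ k * f.toMvPowerSeries 1 =
      C ((-1) ^ ℓ * q ^ k) * ((X 0 * X 1) ^ ℓ * f.toMvPowerSeries 1) := by
    rw [neg_pow, map_mul, map_pow, map_pow, map_neg, map_one]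
    ring
  rw [hfactor, coeff_C_mul, mul_pow, X_pow_eq, X_pow_eq, monomial_mul_monomial, one_mul,
    coeff_monomial_mul, coeff_toMvPowerSeries]
  simp only [Finsupp.le_def, Finsupp.coe_add, Finsupp.coe_tsub, Pi.add_apply, Pi.sub_apply,
    Finsupp.single_eq_same, Finsupp.single_eq_of_ne, zero_ne_one, one_ne_zero, ne_eq,
    not_false_eq_true, add_zero, zero_add, Finsupp.single_tsub, Finsupp.ext_iff, tsub_self,
    Fin.forall_fin_two, and_true, mul_ite, one_mul, mul_zero]
  split_ifs <;> first | rfl | omega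

end MvPowerSeries

/-- `∑_{m=0}^∞ y^m (x;q)_m = ∑_{ℓ=0}^∞ (-xy)^ℓ q^{ℓ(ℓ-1)/2} (y;q)_{ℓ+1}^{-1}` in
`ℤ[q][[x,y]]`, where `(t;q)_m = (1-t)(1-qt)⋯(1-q^{m-1}t)` and each factor `(y;q)_{ℓ+1}`
(having constant term `1`) is invertible, its inverse being given by `Ring.inverse`. -/
theorem twoVariable_qPochhammer_expansion :
    seriesSum (fun m => Yv ^ m * ∏ i ∈ Finset.range m, (1 - qc ^ i * Xv)) =
      seriesSum (fun ℓ =>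
        (-(Xv * Yv)) ^ ℓ * qc ^ (ℓ * (ℓ - 1) / 2)
          * Ring.inverse (∏ i ∈ Finset.range (ℓ + 1), (1 - qc ^ i * Yv))) := by
  funext d
  simp only [seriesSum, map_sum, Xv, Yv, qc, MvPowerSeries.prod_one_sub_C_pow_mul_X,
    MvPowerSeries.ringInverse_toMvPowerSeries_qPochhammer,
    MvPowerSeries.coeff_X_pow_mul_toMvPowerSeries,
    MvPowerSeries.coeff_neg_X_mul_X_pow_mul_C_pow_mul_toMvPowerSeries, ite_and, sum_ite_eq,
    mem_range]
  rw [if_pos (by omega), if_pos (by omega), coeff_qPochhammer, Nat.choose_two_right]
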